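/- arXiv:2503.08630 — 2 statements merged into one kernel-verified Lean document; each statement's English description precedes it below -/
import Mathlib

section
/- Every (k₁+k₂)-graph Ω decomposes as a matched pair: setting Ω₁ = d⁻¹(ℕ^{k₁} × {0}) and Ω₂ = d⁻¹({0} × ℕ^{k₂}), there exist unique actions ▷: Ω₁ * Ω₂ → Ω₂ and ◁: Ω₁ * Ω₂ → Ω₁ such that ω₁ω₂ = (ω₁ ▷ ω₂)(ω₁ ◁ ω₂) for all composable pairs, with d(ω₁ ▷ ω₂) = d(ω₂) and d(ω₁ ◁ ω₂) = d(ω₁). -/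
/-- A small category in the arrows-only picture: a set of morphisms with source and range
maps (valued in identity morphisms) and a partially defined composition, here implemented
as a total function whose value is only constrained on composable pairs.
`comp f g` denotes the composite "first `g`, then `f`" (range on the left). -/
structure ArrowsCat where
  Mor : Type
  s : Mor → Mor
  r : Mor → Mor
  comp : Mor → Mor → Mor
  s_s : ∀ f, s (s f) = s f
  r_s : ∀ f, r (s f) = s f
  s_r : ∀ f, s (r f) = r f
  r_r : ∀ f, r (r f) = r f
  comp_s : ∀ f, comp f (s f) = f
  r_comp_self : ∀ f, comp (r f) f = f
  s_comp : ∀ f g, s f = r g → s (comp f g) = s g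
  r_comp : ∀ f g, s f = r g → r (comp f g) = r f
  assoc : ∀ f g h, s f = r g → s g = r h → comp (comp f g) h = comp f (comp g h)

/-- A `k`-graph: a countable category with a degree functor `d : Λ → ℕᵏ` satisfying the
unique factorization property. -/
structure KGraph (k : ℕ) extends ArrowsCat where
  countable : Countable Mor
  d : Mor → Fin k → ℕ
  d_s : ∀ f, d (s f) = 0
  d_comp : ∀ f g, s f = r g → d (comp f g) = d f + d g
  factor : ∀ (f : Mor) (m n : Fin k → ℕ), d f = m + n →
    ∃! p : Mor × Mor, s p.1 = r p.2 ∧ d p.1 = m ∧ d p.2 = n ∧ comp p.1 p.2 = f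

namespace KGraph

variable {k : ℕ} (Λ : KGraph k)

theorem existsUnique_factor_comp_swap {f g : Λ.Mor} (hfg : Λ.s f = Λ.r g) :
    ∃! p : Λ.Mor × Λ.Mor, Λ.s p.1 = Λ.r p.2 ∧ Λ.d p.1 = Λ.d g ∧ Λ.d p.2 = Λ.d f ∧
      Λ.comp p.1 p.2 = Λ.comp f g :=
  Λ.factor _ _ _ (by rw [Λ.d_comp f g hfg, add_comm])

end KGraph

/-- Every `(k₁+k₂)`-graph `Ω` decomposes as a matched pair: for
`ω₁ ∈ Ω₁ = d⁻¹(ℕ^{k₁} × {0})` and `ω₂ ∈ Ω₂ = d⁻¹({0} × ℕ^{k₂})` with `s ω₁ = r ω₂`,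
there is a unique pair `(ω₁ ▷ ω₂, ω₁ ◁ ω₂) ∈ Ω₂ × Ω₁` with
`ω₁ ω₂ = (ω₁ ▷ ω₂)(ω₁ ◁ ω₂)`, `d (ω₁ ▷ ω₂) = d ω₂` and `d (ω₁ ◁ ω₂) = d ω₁`. -/
theorem stmt3 {k₁ k₂ : ℕ} (Om : KGraph (k₁ + k₂)) :
    ∀ ω₁ ω₂ : Om.Mor,
      (∀ i : Fin (k₁ + k₂), k₁ ≤ (i : ℕ) → Om.d ω₁ i = 0) →
      (∀ i : Fin (k₁ + k₂), (i : ℕ) < k₁ → Om.d ω₂ i = 0) →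
      Om.s ω₁ = Om.r ω₂ →
      ∃! p : Om.Mor × Om.Mor,
        (∀ i : Fin (k₁ + k₂), (i : ℕ) < k₁ → Om.d p.1 i = 0) ∧
        (∀ i : Fin (k₁ + k₂), k₁ ≤ (i : ℕ) → Om.d p.2 i = 0) ∧
        Om.s p.1 = Om.r p.2 ∧
        Om.d p.1 = Om.d ω₂ ∧ Om.d p.2 = Om.d ω₁ ∧
        Om.comp p.1 p.2 = Om.comp ω₁ ω₂ := by
  intro ω₁ ω₂ h₁ h₂ hsr
  refine (existsUnique_congr fun p => ?_).mp (Om.existsUnique_factor_comp_swap hsr)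
  constructor
  · rintro ⟨hsr', hd₁, hd₂, hcomp⟩
    exact ⟨fun i hi => hd₁ ▸ h₂ i hi, fun i hi => hd₂ ▸ h₁ i hi, hsr', hd₁, hd₂, hcomp⟩
  · rintro ⟨-, -, hsr', hd₁, hd₂, hcomp⟩
    exact ⟨hsr', hd₁, hd₂, hcomp⟩
end

section
/- Let Ω be a quasi-product (k₁+k₂)-graph with quasi-factors Λ and Γ. Then in its matched-pair decomposition, Ω₁ decomposes as the disjoint union over w ∈ Γ⁰ of k₁-graphs Ω₁^w × {w}, and Ω₂ decomposes as the disjoint union over x ∈ Λ⁰ of k₂-graphs {x} × Ω₂^x; in particular morphisms of Ω₁ with degree in ℕ^{k₁} × {0} have source and range with the same Γ⁰-coordinate. -/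
/-- An edge-colored directed graph with `k` colors. -/
structure ColoredGraph (k : ℕ) where
  V : Type
  E : Type
  es : E → V
  er : E → V
  color : E → Fin k

namespace ColoredGraph

variable {k k₁ k₂ : ℕ}

/-- A (possibly empty) path in a colored graph: a base (source) vertex together with a
composable list of edges, listed from the range end (head of the list is the last edge
traversed). -/
structure Pth (G : ColoredGraph k) where
  base : G.V
  edges : List G.E
  chain : edges.Chain' fun e f => G.es e = G.er f
  base_src : ∀ e ∈ edges.getLast?, G.es e = base

namespace Pth

variable {G : ColoredGraph k}

/-- The source of a path. -/
def s (p : G.Pth) : G.V := p.base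

/-- The range of a path. -/
def r (p : G.Pth) : G.V := (p.edges.head?.map G.er).getD p.base

/-- The color order of a path. -/
def colors (p : G.Pth) : List (Fin k) := p.edges.map G.color

end Pth

/-- `G.IsComp p q pq` means that `pq` is the composite path "first `q`, then `p`"
(written `pq = p q` in range-on-the-left notation). -/
def IsComp (G : ColoredGraph k) (p q pq : G.Pth) : Prop :=
  p.s = q.r ∧ pq.base = q.base ∧ pq.edges = p.edges ++ q.edges

/-- A factorization rule on the path category of a colored graph: a source-, range- and
color-order-compatible equivalence relation which respects composition (KG0) and such that
every equivalence class contains exactly one path of each permuted color order (KG4).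
The quotient is then a `k`-graph. -/
structure FactRule (G : ColoredGraph k) where
  rel : G.Pth → G.Pth → Prop
  iseqv : Equivalence rel
  s_eq : ∀ p q, rel p q → p.s = q.s
  r_eq : ∀ p q, rel p q → p.r = q.r
  kg0 : ∀ p p' q q' pq p'q', rel p p' → rel q q' →
    G.IsComp p q pq → G.IsComp p' q' p'q' → rel pq p'q'
  kg4 : ∀ (p : G.Pth) (l : List (Fin k)), l.Perm p.colors →
    ∃! q : G.Pth, rel p q ∧ q.colors = l

/-- The Cartesian (box) product of colored graphs. -/
def prodG (G₁ : ColoredGraph k₁) (G₂ : ColoredGraph k₂) : ColoredGraph (k₁ + k₂) where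
  V := G₁.V × G₂.V
  E := G₁.E × G₂.V ⊕ G₁.V × G₂.E
  es e := match e with
    | .inl (e, w) => (G₁.es e, w)
    | .inr (v, f) => (v, G₂.es f)
  er e := match e with
    | .inl (e, w) => (G₁.er e, w)
    | .inr (v, f) => (v, G₂.er f)
  color e := match e with
    | .inl (e, _) => Fin.castAdd k₂ (G₁.color e)
    | .inr (_, f) => Fin.natAdd k₁ (G₂.color f)

/-- The lift of a path of `G₁` to the slice `G₁ × {w}` of the product graph. -/
def lift₁ {G₁ : ColoredGraph k₁} {G₂ : ColoredGraph k₂} (w : G₂.V) (p : G₁.Pth) :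
    (prodG G₁ G₂).Pth where
  base := (p.base, w)
  edges := p.edges.map fun e => Sum.inl (e, w)
  chain := by
    refine (List.isChain_map (fun e => (Sum.inl (e, w) : (prodG G₁ G₂).E))).2 ?_
    refine List.IsChain.imp ?_ p.chain
    intro a b h
    show ((G₁.es a, w) : G₁.V × G₂.V) = (G₁.er b, w)
    rw [h]
  base_src := by
    intro e he
    rw [Option.mem_def] at he
    have he' : Option.map (fun e => (Sum.inl (e, w) : (prodG G₁ G₂).E)) p.edges.getLast? = some e := by
      rw [← List.getLast?_map]; exact he
    obtain ⟨a, ha, rfl⟩ := Option.map_eq_some_iff.1 he'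
    show ((G₁.es a, w) : G₁.V × G₂.V) = (p.base, w)
    rw [p.base_src a ha]

/-- The lift of a path of `G₂` to the slice `{x} × G₂` of the product graph. -/
def lift₂ {G₁ : ColoredGraph k₁} {G₂ : ColoredGraph k₂} (x : G₁.V) (q : G₂.Pth) :
    (prodG G₁ G₂).Pth where
  base := (x, q.base)
  edges := q.edges.map fun f => Sum.inr (x, f)
  chain := by
    refine (List.isChain_map (fun f => (Sum.inr (x, f) : (prodG G₁ G₂).E))).2 ?_
    refine List.IsChain.imp ?_ q.chain
    intro a b h
    show ((x, G₂.es a) : G₁.V × G₂.V) = (x, G₂.er b)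
    rw [h]
  base_src := by
    intro e he
    rw [Option.mem_def] at he
    have he' : Option.map (fun f => (Sum.inr (x, f) : (prodG G₁ G₂).E)) q.edges.getLast? = some e := by
      rw [← List.getLast?_map]; exact he
    obtain ⟨a, ha, rfl⟩ := Option.map_eq_some_iff.1 he'
    show ((x, G₂.es a) : G₁.V × G₂.V) = (x, q.base)
    rw [q.base_src a ha]

/-- The underlying undirected graph is connected. -/
def Connected (G : ColoredGraph k) : Prop :=
  ∀ a b : G.V,
    Relation.ReflTransGen
      (fun u v => ∃ e : G.E, (G.es e = u ∧ G.er e = v) ∨ (G.es e = v ∧ G.er e = u)) a b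

/-- Row-finiteness at the level of the one-skeleton: for each vertex and color order there
are only finitely many paths into that vertex with that color order. -/
def RowFinite (G : ColoredGraph k) : Prop :=
  ∀ (v : G.V) (l : List (Fin k)), {p : G.Pth | p.r = v ∧ p.colors = l}.Finite

/-- A vertex-fixing automorphism of a colored graph. -/
def VertexFixingAut (G : ColoredGraph k) (F : G.E → G.E) : Prop :=
  Function.Bijective F ∧
    ∀ e, G.es (F e) = G.es e ∧ G.er (F e) = G.er e ∧ G.color (F e) = G.color e

end ColoredGraph

open ColoredGraph

/-- A quasi-product `(k₁+k₂)`-graph: its one-skeleton is the product of the one-skeletons of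
`Λ = (G₁, rLam)` and `Γ = (G₂, rGam)`, i.e. the quasi-product is given by a factorization
rule `rOmega` on the product graph; the quasi-factors embed as the slices at `base₂`
resp. `base₁` (the injective degree-compatible functors `ψ₁, ψ₂`). -/
structure QuasiProduct (k₁ k₂ : ℕ) where
  G₁ : ColoredGraph k₁
  G₂ : ColoredGraph k₂
  rLam : G₁.FactRule
  rGam : G₂.FactRule
  rOmega : (prodG G₁ G₂).FactRule
  base₁ : G₁.V
  base₂ : G₂.V
  emb₁ : ∀ p q : G₁.Pth, rLam.rel p q ↔ rOmega.rel (lift₁ base₂ p) (lift₁ base₂ q)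
  emb₂ : ∀ p q : G₂.Pth, rGam.rel p q ↔ rOmega.rel (lift₂ base₁ p) (lift₂ base₁ q)

variable {k₁ k₂ : ℕ}

/-- `ActsTo R p q q' p'` expresses, for a factorization rule `R` on the product graph, that
the Zappa–Szép actions of the associated matched pair satisfy `p ▷ q = q'` and
`q ◁ p = p'`; that is, `([p], r q)(s p, [q]) = (r p, [q'])([p'], s q)`, with `q'` and `p'`
of the same color order as `q` and `p`. -/
def ActsTo {G₁ : ColoredGraph k₁} {G₂ : ColoredGraph k₂}
    (R : (prodG G₁ G₂).FactRule) (p : G₁.Pth) (q : G₂.Pth)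
    (q' : G₂.Pth) (p' : G₁.Pth) : Prop :=
  ∃ lhs rhs : (prodG G₁ G₂).Pth,
    (prodG G₁ G₂).IsComp (lift₁ q.r p) (lift₂ p.s q) lhs ∧
    (prodG G₁ G₂).IsComp (lift₂ p.r q') (lift₁ q.s p') rhs ∧
    R.rel lhs rhs ∧ q'.colors = q.colors ∧ p'.colors = p.colors

/-- The quasi-factor `Γ` of a quasi-product is *stable* if the left action is trivial:
`p ▷ q = q` for all paths. -/
def QuasiProduct.Stable (Q : QuasiProduct k₁ k₂) : Prop :=
  ∀ (p : Q.G₁.Pth) (q q' : Q.G₂.Pth) (p' : Q.G₁.Pth),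
    ActsTo Q.rOmega p q q' p' → q' = q

/-- The factorization rule of the slice `Ω₁^w`, i.e. the rule induced on `G₁`-paths by the
slice `G₁ × {w}` of the quasi-product. -/
def QuasiProduct.relAt₁ (Q : QuasiProduct k₁ k₂) (w : Q.G₂.V) (p p' : Q.G₁.Pth) : Prop :=
  Q.rOmega.rel (lift₁ w p) (lift₁ w p')

/-- The factorization rule of the slice `Ω₂^x`. -/
def QuasiProduct.relAt₂ (Q : QuasiProduct k₁ k₂) (x : Q.G₁.V) (q q' : Q.G₂.Pth) : Prop :=
  Q.rOmega.rel (lift₂ x q) (lift₂ x q')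

/-- `F` implements a (vertex- and color-preserving) isomorphism from the quotient
`k`-graph `G*/R` to `G*/S`. -/
def RelIsoVia (G : ColoredGraph k) (R S : G.Pth → G.Pth → Prop) (F : G.Pth → G.Pth) :
    Prop :=
  (∀ p, (F p).s = p.s ∧ (F p).r = p.r ∧ (F p).colors = p.colors) ∧
  (∀ p p', R p p' ↔ S (F p) (F p')) ∧
  (∀ p', ∃ p, S (F p) p') ∧
  (∀ p1 p2 p c, G.IsComp p1 p2 p → G.IsComp (F p1) (F p2) c → S (F p) c)

/-- An isomorphism of the `k`-graphs determined by two factorization rules on the same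
colored graph, given by a vertex bijection `θV` and a map on paths `θP`. -/
def IsoOfRules {k : ℕ} (G : ColoredGraph k) (R S : G.FactRule)
    (θV : G.V → G.V) (θP : G.Pth → G.Pth) : Prop :=
  Function.Bijective θV ∧
  (∀ p, (θP p).s = θV p.s ∧ (θP p).r = θV p.r ∧ (θP p).colors = p.colors) ∧
  (∀ p p', R.rel p p' ↔ S.rel (θP p) (θP p')) ∧
  (∀ q, ∃ p, S.rel (θP p) q) ∧
  (∀ p1 p2 p c, G.IsComp p1 p2 p → G.IsComp (θP p1) (θP p2) c → S.rel (θP p) c)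

/-- `S` is the product factorization rule of `Λ = (G₁, rLam)` and `Γ = (G₂, rGam)`: its
slices are given by the factor rules and both Zappa–Szép actions are trivial. -/
def IsProductRule (G₁ : ColoredGraph k₁) (G₂ : ColoredGraph k₂)
    (rLam : G₁.FactRule) (rGam : G₂.FactRule) (S : (prodG G₁ G₂).FactRule) : Prop :=
  (∀ (w : G₂.V) (p p' : G₁.Pth), rLam.rel p p' ↔ S.rel (lift₁ w p) (lift₁ w p')) ∧
  (∀ (x : G₁.V) (q q' : G₂.Pth), rGam.rel q q' ↔ S.rel (lift₂ x q) (lift₂ x q')) ∧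
  (∀ (p : G₁.Pth) (q q' : G₂.Pth) (p' : G₁.Pth),
    ActsTo S p q q' p' → q' = q ∧ p' = p)

/-! A path of `Ω` all of whose colors lie in the first block consists of edges `(e, w)`.
Consecutive edges are composable, so `w` is constant along the path and the path is the lift
of a path of `G(Λ)` to the slice at `w`. Paths related by the factorization rule of `Ω` have
the same source and permuted colors, so the slice `G(Λ) × {w}` is closed under the rule, and the
restricted rule inherits (KG0) and (KG4). The same holds for `Γ`. -/

namespace ColoredGraph

variable {k k' : ℕ}

theorem Pth.ext {G : ColoredGraph k} {p q : G.Pth} (hb : p.base = q.base)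
    (he : p.edges = q.edges) : p = q := by
  cases p; cases q; cases hb; cases he; rfl

theorem Pth.apply_es_eq_apply_s {G : ColoredGraph k} {β : Type*} (f : G.V → β) (P : G.Pth)
    (hf : ∀ e ∈ P.edges, f (G.es e) = f (G.er e)) : ∀ e ∈ P.edges, f (G.es e) = f P.s := by
  obtain ⟨base, edges, hchain, hlast⟩ := P
  simp only [Pth.s] at hf ⊢
  induction hchain with
  | nil => simp
  | singleton e => simp_all
  | @cons_cons e e' l hee' _ ih =>
    have ih := ih (by simpa using hlast) (fun x hx => hf x (List.mem_cons_of_mem _ hx))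
    intro x hx
    rcases List.mem_cons.1 hx with rfl | hx
    · rw [hee', ← hf e' (by simp), ih e' List.mem_cons_self]
    · exact ih x hx

structure PthEmbedding (H : ColoredGraph k') (G : ColoredGraph k) where
  vmap : H.V → G.V
  cmap : Fin k' → Fin k
  pmap : H.Pth → G.Pth
  vmap_injective : Function.Injective vmap
  cmap_injective : Function.Injective cmap
  pmap_injective : Function.Injective pmap
  s_pmap : ∀ p, (pmap p).s = vmap p.s
  r_pmap : ∀ p, (pmap p).r = vmap p.r
  colors_pmap : ∀ p, (pmap p).colors = p.colors.map cmap
  isComp_pmap : ∀ {p q pq}, H.IsComp p q pq → G.IsComp (pmap p) (pmap q) (pmap pq)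

def FactRule.comap {H : ColoredGraph k'} {G : ColoredGraph k} (R : G.FactRule)
    (F : PthEmbedding H G)
    (hclosed : ∀ p P (l : List (Fin k')),
      R.rel (F.pmap p) P → P.colors = l.map F.cmap → ∃ q, P = F.pmap q) :
    H.FactRule where
  rel p q := R.rel (F.pmap p) (F.pmap q)
  iseqv := ⟨fun _ => R.iseqv.refl _, R.iseqv.symm, R.iseqv.trans⟩
  s_eq p q h := F.vmap_injective <| by rw [← F.s_pmap, ← F.s_pmap]; exact R.s_eq _ _ h
  r_eq p q h := F.vmap_injective <| by rw [← F.r_pmap, ← F.r_pmap]; exact R.r_eq _ _ h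
  kg0 _ _ _ _ _ _ hp hq h h' := R.kg0 _ _ _ _ _ _ hp hq (F.isComp_pmap h) (F.isComp_pmap h')
  kg4 p l hl := by
    obtain ⟨P, ⟨hpP, hPl⟩, hP_unique⟩ :=
      R.kg4 (F.pmap p) (l.map F.cmap) (by rw [F.colors_pmap]; exact hl.map _)
    obtain ⟨q, rfl⟩ := hclosed p P l hpP hPl
    refine ⟨q, ⟨hpP, ?_⟩, fun q' ⟨hpq', hq'l⟩ => F.pmap_injective (hP_unique _ ⟨hpq', ?_⟩)⟩
    · rw [F.colors_pmap] at hPl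
      exact List.map_injective_iff.2 F.cmap_injective hPl
    · rw [F.colors_pmap, hq'l]

section Product

variable {G₁ : ColoredGraph k₁} {G₂ : ColoredGraph k₂}

theorem lift₁_s (w : G₂.V) (p : G₁.Pth) : (lift₁ w p).s = (p.s, w) := rfl

theorem lift₁_r (w : G₂.V) (p : G₁.Pth) : (lift₁ w p).r = (p.r, w) := by
  cases h : p.edges <;> simp [Pth.r, lift₁, h, prodG]

theorem lift₁_colors (w : G₂.V) (p : G₁.Pth) :
    (lift₁ w p).colors = p.colors.map (Fin.castAdd k₂) := by
  simp [Pth.colors, lift₁, prodG, Function.comp_def]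

theorem lift₁_injective (w : G₂.V) : Function.Injective (lift₁ (G₁ := G₁) w) := by
  intro p q h
  have hb := congrArg (fun P => P.base.1) h
  have he := congrArg Pth.edges h
  simp only [lift₁] at hb he
  exact Pth.ext hb <| List.map_injective_iff.2
    (fun a b hab => congrArg Prod.fst (Sum.inl_injective hab)) he

theorem isComp_lift₁ (w : G₂.V) {p q pq : G₁.Pth} (h : G₁.IsComp p q pq) :
    (prodG G₁ G₂).IsComp (lift₁ w p) (lift₁ w q) (lift₁ w pq) := by
  obtain ⟨hsr, hbase, hedges⟩ := h
  exact ⟨by rw [lift₁_s, lift₁_r, hsr], congrArg (·, w) hbase,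
    (congrArg (List.map _) hedges).trans (List.map_append ..)⟩

theorem lift₂_s (x : G₁.V) (q : G₂.Pth) : (lift₂ x q).s = (x, q.s) := rfl

theorem lift₂_r (x : G₁.V) (q : G₂.Pth) : (lift₂ x q).r = (x, q.r) := by
  cases h : q.edges <;> simp [Pth.r, lift₂, h, prodG]

theorem lift₂_colors (x : G₁.V) (q : G₂.Pth) :
    (lift₂ x q).colors = q.colors.map (Fin.natAdd k₁) := by
  simp [Pth.colors, lift₂, prodG, Function.comp_def]

theorem lift₂_injective (x : G₁.V) : Function.Injective (lift₂ (G₂ := G₂) x) := by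
  intro p q h
  have hb := congrArg (fun P => P.base.2) h
  have he := congrArg Pth.edges h
  simp only [lift₂] at hb he
  exact Pth.ext hb <| List.map_injective_iff.2
    (fun a b hab => congrArg Prod.snd (Sum.inr_injective hab)) he

theorem isComp_lift₂ (x : G₁.V) {p q pq : G₂.Pth} (h : G₂.IsComp p q pq) :
    (prodG G₁ G₂).IsComp (lift₂ x p) (lift₂ x q) (lift₂ x pq) := by
  obtain ⟨hsr, hbase, hedges⟩ := h
  exact ⟨by rw [lift₂_s, lift₂_r, hsr], congrArg (x, ·) hbase,
    (congrArg (List.map _) hedges).trans (List.map_append ..)⟩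

theorem exists_eq_lift₁_of_edges_eq_map (P : (prodG G₁ G₂).Pth) {w : G₂.V} (hw : P.s.2 = w)
    {l : List G₁.E} (hl : l.map (β := (prodG G₁ G₂).E) (fun e => Sum.inl (e, w)) = P.edges) :
    ∃ p, P = lift₁ w p := by
  have hchain : l.IsChain fun a b => G₁.es a = G₁.er b := by
    have := P.chain
    rw [← hl] at this
    exact ((List.isChain_map _).1 this).imp fun a b h => congrArg Prod.fst h
  have hsrc : ∀ e ∈ l.getLast?, G₁.es e = P.s.1 := by
    intro e he
    have he' : (Sum.inl (e, w) : (prodG G₁ G₂).E) ∈ P.edges.getLast? := by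
      rw [← hl]; exact (List.getLast?_map ..).symm ▸ Option.mem_map_of_mem _ he
    exact congrArg Prod.fst (P.base_src _ he')
  exact ⟨⟨P.s.1, l, hchain, hsrc⟩, Pth.ext (Prod.ext rfl hw) hl.symm⟩

theorem exists_eq_lift₁ (P : (prodG G₁ G₂).Pth) (hP : ∀ c ∈ P.colors, (c : ℕ) < k₁) :
    ∃ p, P = lift₁ P.s.2 p := by
  have hinl : ∀ e ∈ P.edges, ∃ a, e = Sum.inl a := by
    rintro (a | ⟨x, f⟩) he
    · exact ⟨a, rfl⟩
    · simpa [prodG] using hP _ (List.mem_map_of_mem he)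
  have hlevel := P.apply_es_eq_apply_s Prod.snd (fun e he => by
    obtain ⟨a, rfl⟩ := hinl e he; rfl)
  have hmem : ∀ e ∈ P.edges,
      e ∈ Set.range fun a => (Sum.inl (a, P.s.2) : (prodG G₁ G₂).E) := by
    intro e he
    obtain ⟨⟨a, w⟩, rfl⟩ := hinl e he
    exact ⟨a, by rw [← hlevel _ he]; rfl⟩
  obtain ⟨l, hl⟩ : P.edges ∈ Set.range (List.map _) := by
    rw [Set.range_list_map]; exact hmem
  exact exists_eq_lift₁_of_edges_eq_map P rfl hl

theorem exists_eq_lift₂_of_edges_eq_map (P : (prodG G₁ G₂).Pth) {x : G₁.V} (hx : P.s.1 = x)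
    {l : List G₂.E} (hl : l.map (β := (prodG G₁ G₂).E) (fun f => Sum.inr (x, f)) = P.edges) :
    ∃ q, P = lift₂ x q := by
  have hchain : l.IsChain fun a b => G₂.es a = G₂.er b := by
    have := P.chain
    rw [← hl] at this
    exact ((List.isChain_map _).1 this).imp fun a b h => congrArg Prod.snd h
  have hsrc : ∀ f ∈ l.getLast?, G₂.es f = P.s.2 := by
    intro f hf
    have hf' : (Sum.inr (x, f) : (prodG G₁ G₂).E) ∈ P.edges.getLast? := by
      rw [← hl]; exact (List.getLast?_map ..).symm ▸ Option.mem_map_of_mem _ hf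
    exact congrArg Prod.snd (P.base_src _ hf')
  exact ⟨⟨P.s.2, l, hchain, hsrc⟩, Pth.ext (Prod.ext hx rfl) hl.symm⟩

theorem exists_eq_lift₂ (P : (prodG G₁ G₂).Pth) (hP : ∀ c ∈ P.colors, k₁ ≤ (c : ℕ)) :
    ∃ q, P = lift₂ P.s.1 q := by
  have hinr : ∀ e ∈ P.edges, ∃ a, e = Sum.inr a := by
    rintro (⟨f, w⟩ | a) he
    · have := hP _ (List.mem_map_of_mem he)
      simp only [prodG, Fin.val_castAdd] at this
      exact absurd this (not_le.2 (G₁.color f).isLt)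
    · exact ⟨a, rfl⟩
  have hlevel := P.apply_es_eq_apply_s Prod.fst (fun e he => by
    obtain ⟨a, rfl⟩ := hinr e he; rfl)
  have hmem : ∀ e ∈ P.edges,
      e ∈ Set.range fun f => (Sum.inr (P.s.1, f) : (prodG G₁ G₂).E) := by
    intro e he
    obtain ⟨⟨x, f⟩, rfl⟩ := hinr e he
    exact ⟨f, by rw [← hlevel _ he]; rfl⟩
  obtain ⟨l, hl⟩ : P.edges ∈ Set.range (List.map _) := by
    rw [Set.range_list_map]; exact hmem
  exact exists_eq_lift₂_of_edges_eq_map P rfl hl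

theorem FactRule.exists_eq_lift₁_of_rel (R : (prodG G₁ G₂).FactRule) {w : G₂.V} {p : G₁.Pth}
    {P : (prodG G₁ G₂).Pth} {l : List (Fin k₁)} (h : R.rel (lift₁ w p) P)
    (hl : P.colors = l.map (Fin.castAdd k₂)) : ∃ q, P = lift₁ w q := by
  have hw : P.s.2 = w := (congrArg Prod.snd (R.s_eq _ _ h)).symm
  obtain ⟨q, hq⟩ := exists_eq_lift₁ P (by simp [hl])
  exact ⟨q, hw ▸ hq⟩

theorem FactRule.exists_eq_lift₂_of_rel (R : (prodG G₁ G₂).FactRule) {x : G₁.V} {q : G₂.Pth}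
    {P : (prodG G₁ G₂).Pth} {l : List (Fin k₂)} (h : R.rel (lift₂ x q) P)
    (hl : P.colors = l.map (Fin.natAdd k₁)) : ∃ q', P = lift₂ x q' := by
  have hx : P.s.1 = x := (congrArg Prod.fst (R.s_eq _ _ h)).symm
  obtain ⟨q', hq'⟩ := exists_eq_lift₂ P (by simp [hl])
  exact ⟨q', hx ▸ hq'⟩

def lift₁Embedding (w : G₂.V) : PthEmbedding G₁ (prodG G₁ G₂) where
  vmap := (·, w)
  cmap := Fin.castAdd k₂
  pmap := lift₁ w
  vmap_injective _ _ h := congrArg Prod.fst h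
  cmap_injective := Fin.castAdd_injective k₁ k₂
  pmap_injective := lift₁_injective w
  s_pmap := lift₁_s w
  r_pmap := lift₁_r w
  colors_pmap := lift₁_colors w
  isComp_pmap := isComp_lift₁ w

def lift₂Embedding (x : G₁.V) : PthEmbedding G₂ (prodG G₁ G₂) where
  vmap := (x, ·)
  cmap := Fin.natAdd k₁
  pmap := lift₂ x
  vmap_injective _ _ h := congrArg Prod.snd h
  cmap_injective := Fin.natAdd_injective k₂ k₁
  pmap_injective := lift₂_injective x
  s_pmap := lift₂_s x
  r_pmap := lift₂_r x
  colors_pmap := lift₂_colors x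
  isComp_pmap := isComp_lift₂ x

end Product

end ColoredGraph

open ColoredGraph in
/-- In a quasi-product `(k₁+k₂)`-graph `Ω` with quasi-factors `Λ, Γ`, the
matched-pair factors decompose as disjoint unions: every path whose colors all lie in the
first block (a morphism of `Ω₁`) lives in a slice `G(Λ) × {w}` (in particular its source
and range have the same `Γ⁰`-coordinate), and dually for `Ω₂`; and each slice
`Ω₁^w`, `Ω₂^x` is a `k₁`- resp. `k₂`-graph (its induced relation is a factorization
rule). -/
theorem stmt5 {k₁ k₂ : ℕ} (Q : QuasiProduct k₁ k₂) :
    (∀ P : (prodG Q.G₁ Q.G₂).Pth, (∀ c ∈ P.colors, (c : ℕ) < k₁) →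
      P.s.2 = P.r.2 ∧ ∃ (w : Q.G₂.V) (p : Q.G₁.Pth), P = lift₁ w p) ∧
    (∀ P : (prodG Q.G₁ Q.G₂).Pth, (∀ c ∈ P.colors, k₁ ≤ (c : ℕ)) →
      P.s.1 = P.r.1 ∧ ∃ (x : Q.G₁.V) (q : Q.G₂.Pth), P = lift₂ x q) ∧
    (∀ w : Q.G₂.V, ∃ R : Q.G₁.FactRule, ∀ p p', R.rel p p' ↔ Q.relAt₁ w p p') ∧
    (∀ x : Q.G₁.V, ∃ R : Q.G₂.FactRule, ∀ q q', R.rel q q' ↔ Q.relAt₂ x q q') := by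
  refine ⟨fun P hP => ?_, fun P hP => ?_, fun w => ?_, fun x => ?_⟩
  · obtain ⟨p, hp⟩ := exists_eq_lift₁ P hP
    exact ⟨by rw [hp, lift₁_s, lift₁_r], _, p, hp⟩
  · obtain ⟨q, hq⟩ := exists_eq_lift₂ P hP
    exact ⟨by rw [hq, lift₂_s, lift₂_r], _, q, hq⟩
  · exact ⟨Q.rOmega.comap (lift₁Embedding w) fun _ _ _ => Q.rOmega.exists_eq_lift₁_of_rel,
      fun _ _ => Iff.rfl⟩
  · exact ⟨Q.rOmega.comap (lift₂Embedding x) fun _ _ _ => Q.rOmega.exists_eq_lift₂_of_rel,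
      fun _ _ => Iff.rfl⟩
end
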